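/- arXiv:math/0101182 — 2 statements merged into one kernel-verified Lean document; each statement's English description precedes it below -/
import Mathlib

section
/- Let m, n ≥ 2 be integers. Let V = (v | Θ̄) ∈ M_n be unitary with v ∈ M_{n,1}, Θ ∈ M_{n,n−1}, and let W ∈ M_m be unitary with Wᵗ = (w | Ξ̄), w ∈ M_{m,1}, Ξ ∈ M_{m,m−1}. Let u ∈ ℂ, Υ ∈ M_{m−1,n−1}, and set Φ = W* · [[u, 0],[0, Υ]] · V* ∈ M_{m,n} (the middle matrix having (1,1)-entry u, bottom-right block Υ, and zeros elsewhere). Suppose A ∈ M_{n−1,n} satisfies A Θ = I_{n−1} and B ∈ M_{m−1,m} satisfies B Ξ = I_{m−1}. Then for every g ∈ ℂ^{n−1}, q ∈ ℂ, and f = Aᵗ g + q·v ∈ ℂⁿ, one has Φ f = (u·(v* Aᵗ g) + u·q − wᵗ B* Υ g)·w̄ + B* Υ g, where v* Aᵗ g and wᵗ B* Υ g denote scalars. -/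
/-!
In the basis given by the columns of `V`, unitarity (`v* v = 1`, `Θᵗ v = 0`) and `Θᵗ Aᵗ = I`
give `V* f = (v* Aᵗ g + q, g)`. Applying the diagonal block matrix and `W* = (w̄ | Ξ)` yields
`u (v* Aᵗ g + q) w̄ + Ξ Υ g`. Finally `Υ g = Ξ* B* Υ g`, and unitarity of `W` gives
`Ξ Ξ* = I - w̄ wᵗ`, so `Ξ Υ g = B* Υ g - (wᵗ B* Υ g) w̄`.
-/

open Matrix

namespace Matrix

theorem mul_fin_one_eq_smul {p α : Type*} [CommSemiring α]
    (M : Matrix p (Fin 1) α) (s : Matrix (Fin 1) (Fin 1) α) : M * s = s 0 0 • M := by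
  ext i j
  simp [Matrix.mul_apply, Fin.fin_one_eq_zero j, mul_comm]

variable {α : Type*} [CommRing α] [StarRing α] {k l o : Type*}
  [Fintype k] [DecidableEq k] [Fintype l] [DecidableEq l]

theorem conjTranspose_fromCols_mul_of_mem_unitaryGroup {v : Matrix (k ⊕ l) k α}
    {Θ : Matrix (k ⊕ l) l α} (hV : fromCols v Θ ∈ unitaryGroup (k ⊕ l) α)
    {A : Matrix (k ⊕ l) l α} (hA : Θᴴ * A = 1) (g : Matrix l o α) (c : Matrix k o α) :
    (fromCols v Θ)ᴴ * (A * g + v * c) = fromRows (vᴴ * (A * g) + c) g := by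
  have hblocks := mem_unitaryGroup_iff'.mp hV
  rw [star_eq_conjTranspose, conjTranspose_fromCols_eq_fromRows_conjTranspose,
    fromRows_mul_fromCols, ← fromBlocks_one, fromBlocks_inj] at hblocks
  obtain ⟨hvv, -, hΘv, -⟩ := hblocks
  rw [conjTranspose_fromCols_eq_fromRows_conjTranspose, fromRows_mul, Matrix.mul_add,
    Matrix.mul_add, ← Matrix.mul_assoc vᴴ v, hvv, ← Matrix.mul_assoc Θᴴ, ← Matrix.mul_assoc Θᴴ,
    hA, hΘv, Matrix.one_mul, Matrix.one_mul, Matrix.zero_mul, add_zero]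

theorem conjTranspose_fromRows_mul_of_mem_unitaryGroup {r : Matrix k (k ⊕ l) α}
    {S : Matrix l (k ⊕ l) α} (hW : fromRows r S ∈ unitaryGroup (k ⊕ l) α)
    {C : Matrix (k ⊕ l) l α} (hC : S * C = 1) (a : Matrix k o α) (b : Matrix l o α) :
    (fromRows r S)ᴴ * fromRows a b = rᴴ * (a - r * (C * b)) + C * b := by
  have hproj : rᴴ * r + Sᴴ * S = 1 := by
    rw [← fromCols_mul_fromRows, ← conjTranspose_fromRows_eq_fromCols_conjTranspose]
    exact star_eq_conjTranspose (fromRows r S) ▸ mem_unitaryGroup_iff'.mp hW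
  have hb : b = S * (C * b) := by rw [← Matrix.mul_assoc, hC, Matrix.one_mul]
  calc (fromRows r S)ᴴ * fromRows a b = rᴴ * a + Sᴴ * (S * (C * b)) := by
        rw [conjTranspose_fromRows_eq_fromCols_conjTranspose, fromCols_mul_fromRows, ← hb]
    _ = rᴴ * a + (1 - rᴴ * r) * (C * b) := by
        rw [← Matrix.mul_assoc, ← hproj, add_sub_cancel_left]
    _ = rᴴ * (a - r * (C * b)) + C * b := by
        rw [Matrix.sub_mul, Matrix.mul_sub, Matrix.one_mul, Matrix.mul_assoc]; abel

end Matrix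

theorem stmt4_general (m n : ℕ)
    (v : Matrix (Fin 1 ⊕ Fin (n - 1)) (Fin 1) ℂ)
    (Θ : Matrix (Fin 1 ⊕ Fin (n - 1)) (Fin (n - 1)) ℂ)
    (w : Matrix (Fin 1 ⊕ Fin (m - 1)) (Fin 1) ℂ)
    (Ξ : Matrix (Fin 1 ⊕ Fin (m - 1)) (Fin (m - 1)) ℂ)
    (V : Matrix (Fin 1 ⊕ Fin (n - 1)) (Fin 1 ⊕ Fin (n - 1)) ℂ)
    (W : Matrix (Fin 1 ⊕ Fin (m - 1)) (Fin 1 ⊕ Fin (m - 1)) ℂ)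
    (hVu : V ∈ Matrix.unitaryGroup (Fin 1 ⊕ Fin (n - 1)) ℂ)
    (hWu : W ∈ Matrix.unitaryGroup (Fin 1 ⊕ Fin (m - 1)) ℂ)
    (hV : V = fromCols v Θᴴᵀ)
    (hW : Wᵀ = fromCols w Ξᴴᵀ)
    (u : ℂ) (Υ : Matrix (Fin (m - 1)) (Fin (n - 1)) ℂ)
    (Φ : Matrix (Fin 1 ⊕ Fin (m - 1)) (Fin 1 ⊕ Fin (n - 1)) ℂ)
    (hΦ : Φ = Wᴴ * fromBlocks (u • (1 : Matrix (Fin 1) (Fin 1) ℂ)) 0 0 Υ * Vᴴ)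
    (A : Matrix (Fin (n - 1)) (Fin 1 ⊕ Fin (n - 1)) ℂ)
    (B : Matrix (Fin (m - 1)) (Fin 1 ⊕ Fin (m - 1)) ℂ)
    (hA : A * Θ = 1) (hB : B * Ξ = 1) :
    ∀ (g : Matrix (Fin (n - 1)) (Fin 1) ℂ) (q : ℂ)
      (f : Matrix (Fin 1 ⊕ Fin (n - 1)) (Fin 1) ℂ), f = Aᵀ * g + q • v →
      Φ * f = (u * (vᴴ * (Aᵀ * g)) 0 0 + u * q - (wᵀ * (Bᴴ * (Υ * g))) 0 0) • wᴴᵀ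
        + Bᴴ * (Υ * g) := by
  rintro g q f rfl
  have hW' : W = fromRows wᵀ Ξᴴ := by rw [← transpose_transpose W, hW, transpose_fromCols]; rfl
  have hAΘ : (Θᴴᵀ)ᴴ * Aᵀ = 1 := by
    rw [← conjTranspose_transpose_eq_transpose_conjTranspose, conjTranspose_conjTranspose,
      ← transpose_mul, hA, transpose_one]
  have hBΞ : Ξᴴ * Bᴴ = 1 := by rw [← conjTranspose_mul, hB, conjTranspose_one]
  subst hV hW'
  have hVf : (fromCols v Θᴴᵀ)ᴴ * (Aᵀ * g + q • v) = fromRows (vᴴ * (Aᵀ * g) + q • 1) g := by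
    rw [← conjTranspose_fromCols_mul_of_mem_unitaryGroup hVu hAΘ, Matrix.mul_smul, Matrix.mul_one]
  rw [hΦ, Matrix.mul_assoc, Matrix.mul_assoc, hVf, fromBlocks_mul_fromRows,
    conjTranspose_fromRows_mul_of_mem_unitaryGroup hWu hBΞ, mul_fin_one_eq_smul]
  simp only [Matrix.zero_mul, add_zero, zero_add, Matrix.smul_mul, Matrix.one_mul]
  congr 2
  simp only [Matrix.sub_apply, Matrix.smul_apply, Matrix.add_apply, one_apply_eq, smul_eq_mul]
  ring

/-- Let `m, n ≥ 2`, let `V = (v | Θ̄) ∈ M_n` be unitary and `W ∈ M_m` unitary with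
`Wᵗ = (w | Ξ̄)`.  Let `u ∈ ℂ`, `Υ ∈ M_{m-1,n-1}` and
`Φ = W* [[u,0],[0,Υ]] V*`.  Suppose `A Θ = I_{n-1}` and `B Ξ = I_{m-1}`.  Then for every
`g ∈ ℂ^{n-1}`, `q ∈ ℂ`, and `f = Aᵗ g + q v`, one has
`Φ f = (u (v* Aᵗ g) + u q − wᵗ B* Υ g) w̄ + B* Υ g`.
(Column vectors in `ℂ^p` are identified with `p × 1` matrices, `Fin n` with
`Fin 1 ⊕ Fin (n-1)`, and `Fin m` with `Fin 1 ⊕ Fin (m-1)`; the scalars `v* Aᵗ g` and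
`wᵗ B* Υ g` are the unique entries of the corresponding `1 × 1` matrices.) -/
theorem stmt4 (m n : ℕ) (hm : 2 ≤ m) (hn : 2 ≤ n)
    (v : Matrix (Fin 1 ⊕ Fin (n - 1)) (Fin 1) ℂ)
    (Θ : Matrix (Fin 1 ⊕ Fin (n - 1)) (Fin (n - 1)) ℂ)
    (w : Matrix (Fin 1 ⊕ Fin (m - 1)) (Fin 1) ℂ)
    (Ξ : Matrix (Fin 1 ⊕ Fin (m - 1)) (Fin (m - 1)) ℂ)
    (V : Matrix (Fin 1 ⊕ Fin (n - 1)) (Fin 1 ⊕ Fin (n - 1)) ℂ)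
    (W : Matrix (Fin 1 ⊕ Fin (m - 1)) (Fin 1 ⊕ Fin (m - 1)) ℂ)
    (hVu : V ∈ Matrix.unitaryGroup (Fin 1 ⊕ Fin (n - 1)) ℂ)
    (hWu : W ∈ Matrix.unitaryGroup (Fin 1 ⊕ Fin (m - 1)) ℂ)
    (hV : V = fromCols v Θᴴᵀ)
    (hW : Wᵀ = fromCols w Ξᴴᵀ)
    (u : ℂ) (Υ : Matrix (Fin (m - 1)) (Fin (n - 1)) ℂ)
    (Φ : Matrix (Fin 1 ⊕ Fin (m - 1)) (Fin 1 ⊕ Fin (n - 1)) ℂ)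
    (hΦ : Φ = Wᴴ * fromBlocks (u • (1 : Matrix (Fin 1) (Fin 1) ℂ)) 0 0 Υ * Vᴴ)
    (A : Matrix (Fin (n - 1)) (Fin 1 ⊕ Fin (n - 1)) ℂ)
    (B : Matrix (Fin (m - 1)) (Fin 1 ⊕ Fin (m - 1)) ℂ)
    (hA : A * Θ = 1) (hB : B * Ξ = 1) :
    ∀ (g : Matrix (Fin (n - 1)) (Fin 1) ℂ) (q : ℂ)
      (f : Matrix (Fin 1 ⊕ Fin (n - 1)) (Fin 1) ℂ), f = Aᵀ * g + q • v →
      Φ * f = (u * (vᴴ * (Aᵀ * g)) 0 0 + u * q - (wᵀ * (Bᴴ * (Υ * g))) 0 0) • wᴴᵀ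
        + Bᴴ * (Υ * g) :=
  stmt4_general m n v Θ w Ξ V W hVu hWu hV hW u Υ Φ hΦ A B hA hB
end

section
/- For every z ∈ ℂ with |z| = 1, the 2×2 matrices M₁(z) = (1/√2)·[[1, −z⁵],[z̄⁵, 1]] and M₂(z) = (1/√2)·[[z̄, 1],[−1, z]] are unitary, and [[z̄², 0],[0, z̄⁶]] = M₁(z) · [[z̄, 0],[0, z̄⁷]] · M₂(z), where z̄ denotes the complex conjugate of z. -/
/-!
On the unit circle `z̄ = z⁻¹`, so every entry is a monomial in `z̄` and the factorization is a
polynomial identity modulo `z z̄ = 1`. Both factors have the shape `c • [[a, b], [-b̄, ā]]`,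
which is unitary as soon as `|c|² (|a|² + |b|²) = 1`.
-/

open Matrix

theorem Matrix.smul_fin_two_mem_unitaryGroup {R : Type*} [CommRing R] [StarRing R] (a b c : R)
    (h : c * star c * (a * star a + b * star b) = 1) :
    c • !![a, b; -star b, star a] ∈ unitaryGroup (Fin 2) R := by
  have hmul : c • !![a, b; -star b, star a] * star (c • !![a, b; -star b, star a]) =
      (c * star c * (a * star a + b * star b)) • 1 := by
    ext i j
    fin_cases i <;> fin_cases j <;> simp [mul_apply, Fin.sum_univ_two] <;> ring
  rw [mem_unitaryGroup_iff, hmul, h, one_smul]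

-- `u` plays the role of `w⁻¹`; in the application `w = z̄`, `u = z` and `c = 1/√2`.
theorem Matrix.fin_two_diagonal_eq_mul_mul {R : Type*} [CommRing R] (u w c : R)
    (huw : u * w = 1) (hc : c * c * 2 = 1) :
    !![w ^ 2, 0; 0, w ^ 6] =
      (c • !![1, -u ^ 5; w ^ 5, 1]) * !![w, 0; 0, w ^ 7] * (c • !![w, 1; -1, u]) := by
  have hpow (k : ℕ) : u ^ k * w ^ k = 1 := by rw [← mul_pow, huw, one_pow]
  ext i j
  fin_cases i <;> fin_cases j <;> simp [mul_apply, Fin.sum_univ_two]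
  · linear_combination -w ^ 2 * hc - c ^ 2 * w ^ 2 * hpow 5
  · linear_combination c ^ 2 * w * hpow 6
  · ring
  · linear_combination -w ^ 6 * hc - c ^ 2 * w ^ 6 * huw

/-- For every `z ∈ ℂ` with `|z| = 1`, the matrices
`M₁(z) = (1/√2)·[[1, −z⁵],[z̄⁵, 1]]` and `M₂(z) = (1/√2)·[[z̄, 1],[−1, z]]` are unitary and
`[[z̄², 0],[0, z̄⁶]] = M₁(z) · [[z̄, 0],[0, z̄⁷]] · M₂(z)`. -/
theorem stmt6 (z : ℂ) (hz : ‖z‖ = 1) :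
    ((1 / (Real.sqrt 2 : ℂ)) • !![1, -z ^ 5; (starRingEnd ℂ z) ^ 5, 1]
        ∈ Matrix.unitaryGroup (Fin 2) ℂ) ∧
    ((1 / (Real.sqrt 2 : ℂ)) • !![starRingEnd ℂ z, 1; -1, z]
        ∈ Matrix.unitaryGroup (Fin 2) ℂ) ∧
    !![(starRingEnd ℂ z) ^ 2, 0; 0, (starRingEnd ℂ z) ^ 6] =
      ((1 / (Real.sqrt 2 : ℂ)) • !![1, -z ^ 5; (starRingEnd ℂ z) ^ 5, 1]) *
        !![starRingEnd ℂ z, 0; 0, (starRingEnd ℂ z) ^ 7] *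
        ((1 / (Real.sqrt 2 : ℂ)) • !![starRingEnd ℂ z, 1; -1, z]) := by
  set c : ℂ := 1 / (Real.sqrt 2 : ℂ) with hc_def
  have hc : c * c * 2 = 1 := by
    rw [hc_def, div_mul_div_comm, ← Complex.ofReal_mul, Real.mul_self_sqrt zero_le_two]
    norm_num
  have hc_star : star c = c := by simp [hc_def, Complex.conj_ofReal]
  have hzz : z * starRingEnd ℂ z = 1 := by simp [Complex.mul_conj', hz]
  have hzz5 : z ^ 5 * starRingEnd ℂ z ^ 5 = 1 := by rw [← mul_pow, hzz, one_pow]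
  refine ⟨?_, ?_, fin_two_diagonal_eq_mul_mul z _ c hzz hc⟩
  · have h := smul_fin_two_mem_unitaryGroup 1 (-z ^ 5) c (by
      simp only [star_one, star_neg, star_pow, Complex.star_def, hc_star]
      linear_combination c * c * hzz5 + hc)
    rwa [star_one, star_neg, neg_neg, star_pow, Complex.star_def] at h
  · have h := smul_fin_two_mem_unitaryGroup (starRingEnd ℂ z) 1 c (by
      simp only [star_one, Complex.star_def, Complex.conj_conj, hc_star]
      linear_combination c * c * hzz + hc)
    rwa [star_one, Complex.star_def, Complex.conj_conj] at h
end
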